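/- For every y₀ ≥ 1, q > 1 and C > 0, any differentiable function y : [t₀, T] → ℝ with y(t) ≥ 1, y(t₀) = y₀ and y'(t) ≤ C·y(t)^q on [t₀, T] satisfies y(t) ≤ y₀ / (1 - y₀^(q-1)·(q-1)·C·(t - t₀))^(1/(q-1)) for all t ∈ [t₀, T] with t < t₀ + 1/(y₀^(q-1)·(q-1)·C). -/
import Mathlib

open Real Set

theorem stmt_9 (t₀ T C q y₀ : ℝ) (y y' : ℝ → ℝ)
    (hy₀ : 1 ≤ y₀) (hq : 1 < q) (hC : 0 < C)
    (hy1 : ∀ t ∈ Set.Icc t₀ T, 1 ≤ y t)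
    (hinit : y t₀ = y₀)
    (hderiv : ∀ t ∈ Set.Icc t₀ T, HasDerivAt y (y' t) t)
    (hineq : ∀ t ∈ Set.Icc t₀ T, y' t ≤ C * y t ^ q) :
    ∀ t ∈ Set.Icc t₀ T, t < t₀ + 1 / (y₀ ^ (q - 1) * (q - 1) * C) →
      y t ≤ y₀ / (1 - y₀ ^ (q - 1) * (q - 1) * C * (t - t₀)) ^ (1 / (q - 1)) := by
  intro t ht htlt
  obtain ⟨ht₀, htT⟩ := ht
  have hy₀pos : (0:ℝ) < y₀ := lt_of_lt_of_le one_pos hy₀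
  have hq1 : (0:ℝ) < q - 1 := by linarith
  have h1qne : (1 : ℝ) - q ≠ 0 := by intro h; apply hq1.ne'; linarith
  set D := y₀ ^ (q - 1) * (q - 1) * C with hD
  have hDpos : 0 < D := by
    have := Real.rpow_pos_of_pos hy₀pos (q - 1)
    positivity
  set B := 1 - D * (t - t₀) with hBdef
  have hB : 0 < B := by
    have h1 : t - t₀ < 1 / D := by linarith
    have := (lt_div_iff₀ hDpos).mp h1
    simp only [hBdef]; linarith
  -- the auxiliary function
  set g : ℝ → ℝ := fun s => y s ^ (1 - q) + (q - 1) * C * (s - t₀) with hg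
  have hypos : ∀ s ∈ Icc t₀ T, 0 < y s := fun s hs => lt_of_lt_of_le one_pos (hy1 s hs)
  have hg' : ∀ s ∈ Icc t₀ T,
      HasDerivAt g (y' s * (1 - q) * y s ^ (1 - q - 1) + (q - 1) * C) s := by
    intro s hs
    have h1 : HasDerivAt (fun u => y u ^ (1 - q)) (y' s * (1 - q) * y s ^ (1 - q - 1)) s :=
      (hderiv s hs).rpow_const (Or.inl (hypos s hs).ne')
    have h2 : HasDerivAt (fun u => (q - 1) * C * (u - t₀)) ((q - 1) * C) s := by
      simpa using ((hasDerivAt_id s).sub_const t₀).const_mul ((q - 1) * C)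
    exact h1.add h2
  have hderiv_nonneg : ∀ s ∈ Icc t₀ T,
      0 ≤ y' s * (1 - q) * y s ^ (1 - q - 1) + (q - 1) * C := by
    intro s hs
    have hu : 0 < y s := hypos s hs
    have hneg : (1 : ℝ) - q - 1 = -q := by ring
    rw [hneg]
    have hpow : y s ^ q * y s ^ (-q) = 1 := by
      rw [← Real.rpow_add hu]; simp
    have hppos : 0 < y s ^ (-q) := Real.rpow_pos_of_pos hu _
    have h1 : y' s * y s ^ (-q) ≤ C * (y s ^ q * y s ^ (-q)) := by
      have := mul_le_mul_of_nonneg_right (hineq s hs) hppos.le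
      linarith [this]
    rw [hpow, mul_one] at h1
    nlinarith [h1, hq1]
  -- monotonicity of g on Icc
  have hcont : ContinuousOn g (Icc t₀ T) := by
    intro s hs
    have hy : ContinuousWithinAt y (Icc t₀ T) s :=
      (hderiv s hs).continuousAt.continuousWithinAt
    exact (hy.rpow_const (Or.inl (hypos s hs).ne')).add
      (((continuousWithinAt_id).sub continuousWithinAt_const).const_smul ((q-1)*C))
  have hmono : MonotoneOn g (Icc t₀ T) := by
    apply monotoneOn_of_deriv_nonneg (convex_Icc t₀ T) hcont
    · intro x hx
      rw [interior_Icc] at hx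
      exact ((hg' x (Ioo_subset_Icc_self hx)).differentiableAt).differentiableWithinAt
    · intro x hx
      rw [interior_Icc] at hx
      rw [(hg' x (Ioo_subset_Icc_self hx)).deriv]
      exact hderiv_nonneg x (Ioo_subset_Icc_self hx)
  have hT : t₀ ≤ T := le_trans ht₀ htT
  have hmle : g t₀ ≤ g t := hmono ⟨le_refl t₀, hT⟩ ⟨ht₀, htT⟩ ht₀
  have key : y₀ ^ (1 - q) ≤ y t ^ (1 - q) + (q - 1) * C * (t - t₀) := by
    simpa [hg, hinit] using hmle
  -- A = y₀^(1-q) * B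
  have hone : y₀ ^ (1 - q) * y₀ ^ (q - 1) = 1 := by
    rw [← Real.rpow_add hy₀pos]; simp
  have hApos : 0 < y₀ ^ (1 - q) * B :=
    mul_pos (Real.rpow_pos_of_pos hy₀pos _) hB
  have hAle : y₀ ^ (1 - q) * B ≤ y t ^ (1 - q) := by
    have : y₀ ^ (1 - q) * B = y₀ ^ (1 - q) - (q - 1) * C * (t - t₀) := by
      simp only [hBdef, hD]
      linear_combination (-(q - 1) * C * (t - t₀)) * hone
    rw [this]; linarith
  -- apply antitone rpow
  have hzneg : 1 / (1 - q) ≤ 0 := by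
    apply div_nonpos_of_nonneg_of_nonpos zero_le_one; linarith
  have hmain := Real.rpow_le_rpow_of_nonpos hApos hAle hzneg
  have hytpos : 0 < y t := hypos t ⟨ht₀, htT⟩
  have hlhs : (y t ^ (1 - q)) ^ (1 / (1 - q)) = y t := by
    rw [← Real.rpow_mul hytpos.le, mul_one_div_cancel h1qne, Real.rpow_one]
  have hrhs : (y₀ ^ (1 - q) * B) ^ (1 / (1 - q)) = y₀ / B ^ (1 / (q - 1)) := by
    rw [Real.mul_rpow (Real.rpow_pos_of_pos hy₀pos _).le hB.le,
      ← Real.rpow_mul hy₀pos.le, mul_one_div_cancel h1qne, Real.rpow_one]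
    have hexp : 1 / (1 - q) = -(1 / (q - 1)) := by
      rw [show (1:ℝ) - q = -(q - 1) from by ring, one_div, inv_neg, one_div]
    rw [hexp, Real.rpow_neg hB.le]
    exact (div_eq_mul_inv _ _).symm
  rw [hlhs, hrhs] at hmain
  exact hmain
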